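/- Let N = (N_2,…,N_ℓ) with N_2 ⊇ N_3 ⊇ … ⊇ N_ℓ, all N_j finite subsets of ℝ. Then the set B_ℓ = (∩_{2≤j≤ℓ} {x_1 − x_j < (min N_j)·z}) ∩ {x_2 < x_3 < … < x_ℓ} ∩ {z > 0} is a nonempty chamber of the cone over the N-Ish arrangement in ℝ^{ℓ+1}. -/
import Mathlib


noncomputable section

variable {V : Type*} [TopologicalSpace V] [AddCommGroup V] [Module ℝ V]

/-- The complement of a central arrangement given by linear forms. -/
def arrCompl (A : Set (V →ₗ[ℝ] ℝ)) : Set V := {v | ∀ f ∈ A, f v ≠ 0}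

/-- The chambers: connected components of the complement. -/
def chambers (A : Set (V →ₗ[ℝ] ℝ)) : Set (Set V) :=
  {C | ∃ x ∈ arrCompl A, C = connectedComponentIn (arrCompl A) x}

/-- A hyperplane `f = 0` separates `B` from `C`. -/
def Separates (f : V →ₗ[ℝ] ℝ) (B C : Set V) : Prop :=
  ((∀ v ∈ B, f v < 0) ∧ (∀ v ∈ C, 0 < f v)) ∨
    ((∀ v ∈ B, 0 < f v) ∧ (∀ v ∈ C, f v < 0))

/-- The number of hyperplanes of `A` separating `B` from `C`. -/
def sepCount (A : Set (V →ₗ[ℝ] ℝ)) (B C : Set V) : ℕ :=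
  {f ∈ A | Separates f B C}.ncard

/-- coordinate projection -/
def pr {ι : Type*} (o : ι) : ((ι → ℝ) →ₗ[ℝ] ℝ) := LinearMap.proj o

/-- The linear forms of the cone over the `N`-Ish arrangement in `ℝ^{ℓ+1}`, `ℓ = n+1`:
`z`, `x_i - x_j` (2 ≤ i < j ≤ ℓ), `x_1 - x_j - a z` (2 ≤ j ≤ ℓ, a ∈ N_j).
Coordinates: `some 0` is `x₁`, `some i.succ` is `x_{i+2}`, `none` is `z`. -/
def coneIshLin (n : ℕ) (N : Fin n → Finset ℝ) :
    Set ((Option (Fin (n + 1)) → ℝ) →ₗ[ℝ] ℝ) :=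
  {pr none} ∪
    {f | ∃ i j : Fin n, i < j ∧ f = pr (some i.succ) - pr (some j.succ)} ∪
    {f | ∃ j : Fin n, ∃ a ∈ N j, f = pr (some 0) - pr (some j.succ) - a • pr none}


/-- For `N₂ ⊇ N₃ ⊇ … ⊇ N_ℓ` (here `N j ⊇ N k` for `j ≤ k`), the set
`B = (∩_j {x₁ - x_{j} < (min N_j) z}) ∩ {x₂ < x₃ < ⋯ < x_ℓ} ∩ {z > 0}`
(the first inequality being omitted when `N_j = ∅`) is a nonempty chamber of the
cone over the `N`-Ish arrangement in `ℝ^{ℓ+1}`. -/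
theorem base_chamber (n : ℕ) (N : Fin n → Finset ℝ)
    (hN : ∀ i j : Fin n, i ≤ j → N j ⊆ N i) :
    ({v : Option (Fin (n + 1)) → ℝ |
        (∀ j : Fin n, ∀ h : (N j).Nonempty,
          v (some 0) - v (some j.succ) < (N j).min' h * v none) ∧
        (∀ i j : Fin n, i < j → v (some i.succ) < v (some j.succ)) ∧
        0 < v none}
      ∈ chambers (coneIshLin n N)) ∧
    ({v : Option (Fin (n + 1)) → ℝ |
        (∀ j : Fin n, ∀ h : (N j).Nonempty,
          v (some 0) - v (some j.succ) < (N j).min' h * v none) ∧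
        (∀ i j : Fin n, i < j → v (some i.succ) < v (some j.succ)) ∧
        0 < v none} : Set (Option (Fin (n + 1)) → ℝ)).Nonempty := by
  classical
  set B : Set (Option (Fin (n + 1)) → ℝ) :=
    {v : Option (Fin (n + 1)) → ℝ |
        (∀ j : Fin n, ∀ h : (N j).Nonempty,
          v (some 0) - v (some j.succ) < (N j).min' h * v none) ∧
        (∀ i j : Fin n, i < j → v (some i.succ) < v (some j.succ)) ∧
        0 < v none} with hBdef
  -- a point of B
  set m : Fin n → ℝ := fun j => if h : (N j).Nonempty then (N j).min' h else 0 with hm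
  set S : Finset ℝ := insert 0 (Finset.univ.image fun j : Fin n => m j + (j : ℝ) + 1) with hS
  have hSne : S.Nonempty := ⟨0, Finset.mem_insert_self _ _⟩
  set c : ℝ := S.min' hSne - 1 with hc
  set x₀ : Option (Fin (n + 1)) → ℝ :=
    fun o => Option.elim o 1 (fun k => if k = 0 then c else ((k : ℕ) : ℝ)) with hx₀
  have hx₀0 : x₀ (some 0) = c := by simp [hx₀]
  have hx₀s : ∀ j : Fin n, x₀ (some j.succ) = (j : ℝ) + 1 := by
    intro j
    simp only [hx₀, Option.elim, if_neg (Fin.succ_ne_zero j), Fin.val_succ]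
    push_cast; ring
  have hx₀z : x₀ none = 1 := rfl
  have hx₀B : x₀ ∈ B := by
    refine ⟨?_, ?_, by norm_num [hx₀z]⟩
    · intro j h
      rw [hx₀0, hx₀s, hx₀z, mul_one]
      have h1 : m j + (j : ℝ) + 1 ∈ S :=
        Finset.mem_insert_of_mem (Finset.mem_image_of_mem _ (Finset.mem_univ j))
      have h2 := Finset.min'_le S _ h1
      have h3 : m j = (N j).min' h := by rw [hm]; simp [h]
      rw [← h3]; rw [hc] at *; linarith
    · intro i j hij
      rw [hx₀s, hx₀s]
      have : (i : ℝ) < (j : ℝ) := by exact_mod_cast hij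
      linarith
  -- B is inside the complement
  have hBsub : B ⊆ arrCompl (coneIshLin n N) := by
    rintro v ⟨h1, h2, h3⟩ f hf
    simp only [coneIshLin, Set.mem_union, Set.mem_singleton_iff, Set.mem_setOf_eq] at hf
    rcases hf with (rfl | ⟨i, j, hij, rfl⟩) | ⟨j, a, ha, rfl⟩
    · simpa [pr] using ne_of_gt h3
    · simp only [LinearMap.sub_apply, pr, LinearMap.proj_apply]
      exact sub_ne_zero.2 (ne_of_lt (h2 i j hij))
    · simp only [LinearMap.sub_apply, LinearMap.smul_apply, pr, LinearMap.proj_apply, smul_eq_mul]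
      have hne : (N j).Nonempty := ⟨a, ha⟩
      have hmin : (N j).min' hne ≤ a := Finset.min'_le _ _ ha
      have h4 := h1 j hne
      have h5 : (N j).min' hne * v none ≤ a * v none :=
        mul_le_mul_of_nonneg_right hmin h3.le
      have : v (some 0) - v (some j.succ) - a * v none < 0 := by linarith
      exact ne_of_lt this
  -- B is open
  have hBopen : IsOpen B := by
    have hB2 : B = (⋂ j : Fin n, ⋂ h : (N j).Nonempty,
        {v : Option (Fin (n + 1)) → ℝ | v (some 0) - v (some j.succ) < (N j).min' h * v none}) ∩
        ((⋂ i : Fin n, ⋂ j : Fin n, ⋂ _ : i < j,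
          {v : Option (Fin (n + 1)) → ℝ | v (some i.succ) < v (some j.succ)}) ∩
        {v : Option (Fin (n + 1)) → ℝ | 0 < v none}) := by
      ext v
      simp only [hBdef, Set.mem_setOf_eq, Set.mem_inter_iff, Set.mem_iInter]
    rw [hB2]
    exact ((isOpen_iInter_of_finite fun j => isOpen_iInter_of_finite fun h =>
        isOpen_lt (by fun_prop) (by fun_prop)).inter
      (((isOpen_iInter_of_finite fun i => isOpen_iInter_of_finite fun j =>
          isOpen_iInter_of_finite fun _ => isOpen_lt (by fun_prop) (by fun_prop)).inter
        (isOpen_lt (by fun_prop) (by fun_prop)))))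
  -- B is convex
  have hBconv : Convex ℝ B := by
    have hB2 : B = (⋂ j : Fin n, ⋂ h : (N j).Nonempty,
        {v : Option (Fin (n + 1)) → ℝ |
          (pr (some 0) - pr (some j.succ) - ((N j).min' h) • pr none :
            (Option (Fin (n + 1)) → ℝ) →ₗ[ℝ] ℝ) v < 0}) ∩
        ((⋂ i : Fin n, ⋂ j : Fin n, ⋂ _ : i < j,
          {v : Option (Fin (n + 1)) → ℝ | (pr (some i.succ) - pr (some j.succ) :
            (Option (Fin (n + 1)) → ℝ) →ₗ[ℝ] ℝ) v < 0}) ∩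
        {v : Option (Fin (n + 1)) → ℝ | (0 : ℝ) < (pr (none : Option (Fin (n + 1)))) v}) := by
      ext v
      simp only [hBdef, Set.mem_setOf_eq, Set.mem_inter_iff, Set.mem_iInter,
        LinearMap.sub_apply, LinearMap.smul_apply, pr, LinearMap.proj_apply, smul_eq_mul,
        sub_neg]
    rw [hB2]
    exact ((convex_iInter fun j => convex_iInter fun h =>
        convex_halfSpace_lt (LinearMap.isLinear _) 0).inter
      ((convex_iInter fun i => convex_iInter fun j => convex_iInter fun _ =>
          convex_halfSpace_lt (LinearMap.isLinear _) 0).inter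
        (convex_halfSpace_gt (LinearMap.isLinear _) 0)))
  -- the open set covering the rest of the complement
  set W : Set (Option (Fin (n + 1)) → ℝ) :=
    ({v : Option (Fin (n + 1)) → ℝ | v none < 0} ∪
      ⋃ i : Fin n, ⋃ j : Fin n, ⋃ _ : i < j,
        {v : Option (Fin (n + 1)) → ℝ | v (some j.succ) < v (some i.succ)}) ∪
      ⋃ j : Fin n, ⋃ h : (N j).Nonempty,
        {v : Option (Fin (n + 1)) → ℝ |
          (N j).min' h * v none < v (some 0) - v (some j.succ)} with hW
  have hWopen : IsOpen W := by
    exact (((isOpen_lt (by fun_prop) (by fun_prop)).union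
      (isOpen_iUnion fun i => isOpen_iUnion fun j => isOpen_iUnion fun _ =>
        isOpen_lt (by fun_prop) (by fun_prop))).union
      (isOpen_iUnion fun j => isOpen_iUnion fun h => isOpen_lt (by fun_prop) (by fun_prop)))
  have hdisj : Disjoint B W := by
    rw [Set.disjoint_left]
    rintro v ⟨h1, h2, h3⟩ hvW
    simp only [hW, Set.mem_union, Set.mem_setOf_eq, Set.mem_iUnion] at hvW
    rcases hvW with (hv | ⟨i, j, hij, hv⟩) | ⟨j, h, hv⟩
    · linarith
    · exact absurd (h2 i j hij) (by linarith)
    · exact absurd (h1 j h) (by linarith)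
  have hcover : arrCompl (coneIshLin n N) ⊆ B ∪ W := by
    intro v hv
    by_cases hvB : v ∈ B
    · exact Or.inl hvB
    right
    simp only [hBdef, Set.mem_setOf_eq, not_and_or] at hvB
    push_neg at hvB
    simp only [hW, Set.mem_union, Set.mem_setOf_eq, Set.mem_iUnion]
    rcases hvB with (⟨j, h, hle⟩ | ⟨i, j, hij, hle⟩ | hle)
    · right
      refine ⟨j, h, ?_⟩
      have hne := hv _ (Or.inr ⟨j, (N j).min' h, (N j).min'_mem h, rfl⟩)
      simp only [LinearMap.sub_apply, LinearMap.smul_apply, pr, LinearMap.proj_apply,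
        smul_eq_mul] at hne
      exact lt_of_le_of_ne hle (Ne.symm (sub_ne_zero.1 hne))
    · left; right
      refine ⟨i, j, hij, ?_⟩
      have hne := hv _ (Or.inl (Or.inr ⟨i, j, hij, rfl⟩))
      simp only [LinearMap.sub_apply, pr, LinearMap.proj_apply] at hne
      exact lt_of_le_of_ne hle (Ne.symm (sub_ne_zero.1 hne))
    · left; left
      have hne := hv _ (Or.inl (Or.inl rfl))
      simp only [pr, LinearMap.proj_apply] at hne
      exact lt_of_le_of_ne hle hne
  have hx₀c : x₀ ∈ arrCompl (coneIshLin n N) := hBsub hx₀B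
  refine ⟨⟨x₀, hx₀c, ?_⟩, ⟨x₀, hx₀B⟩⟩
  apply Set.Subset.antisymm
  · exact hBconv.isPreconnected.subset_connectedComponentIn hx₀B hBsub
  · exact IsPreconnected.subset_left_of_subset_union hBopen hWopen hdisj
      ((connectedComponentIn_subset _ _).trans hcover)
      ⟨x₀, mem_connectedComponentIn hx₀c, hx₀B⟩
      isPreconnected_connectedComponentIn

end
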